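/- Let $\mathcal{L}$ be a self-adjoint operator on a Hilbert space $\mathcal{H}$, $f \in \mathcal{H}$, and let $\mu_f$ be the scalar spectral measure of $f$. Let $a_1, \dots, a_m$ be distinct points in the open upper half-plane with residues $\alpha_j$ solving the Vandermonde system, and let $K_\epsilon(x) = \epsilon^{-1}K(x/\epsilon)$ where $K(x) = \frac{1}{2\pi i}\sum_j (\alpha_j/(x-a_j) - \overline{\alpha_j}/(x-\overline{a_j}))$. Then for all $x \in \mathbb{R}$ and $\epsilon > 0$: $[K_\epsilon * \mu_f](x) = -\frac{1}{\pi}\sum_{j=1}^m \mathrm{Im}\left( \alpha_j \langle (\mathcal{L} - (x - \epsilon a_j))^{-1} f, f \rangle \right)$. -/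

import Mathlib

/-!
The kernel is `K(t) = π⁻¹ ∑ⱼ Im (αⱼ / (t - aⱼ))`, and rescaling turns
`ε⁻¹ K((x - λ)/ε)` into `-π⁻¹ ∑ⱼ Im (αⱼ (λ - zⱼ)⁻¹)` with `zⱼ = x - ε aⱼ` off the real axis.
Each summand is bounded by `|αⱼ| / |Im zⱼ|`, hence integrable against the finite measure `μ`,
so integrating term by term and commuting `Im` with the integral yields the resolvent values.
-/

open MeasureTheory Complex

local notation "⟪" x ", " y "⟫" => @inner ℂ _ _ x y

/-- The (real part of the) rational kernel
`K(x) = (2πi)⁻¹ ∑ⱼ (αⱼ/(x - aⱼ) - conj αⱼ/(x - conj aⱼ))`. -/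
noncomputable def ratKernel (m : ℕ) (a α : Fin m → ℂ) (x : ℝ) : ℝ :=
  ((2 * (Real.pi : ℂ) * Complex.I)⁻¹ *
    ∑ j, (α j / ((x : ℂ) - a j) -
      (starRingEnd ℂ) (α j) / ((x : ℂ) - (starRingEnd ℂ) (a j)))).re

theorem ratKernel_eq_sum_im (m : ℕ) (a α : Fin m → ℂ) (t : ℝ) :
    ratKernel m a α t = Real.pi⁻¹ * ∑ j, (α j / ((t : ℂ) - a j)).im := by
  have hconj : ∀ j, (starRingEnd ℂ) (α j) / ((t : ℂ) - (starRingEnd ℂ) (a j))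
      = (starRingEnd ℂ) (α j / ((t : ℂ) - a j)) := by
    intro j
    simp only [map_div₀, map_sub, conj_ofReal]
  have hsum : ∑ j, (α j / ((t : ℂ) - a j) -
      (starRingEnd ℂ) (α j) / ((t : ℂ) - (starRingEnd ℂ) (a j)))
      = ((2 * ∑ j, (α j / ((t : ℂ) - a j)).im : ℝ) : ℂ) * I := by
    simp only [hconj, sub_conj]
    push_cast
    rw [Finset.mul_sum, Finset.sum_mul]
  have hπ : (Real.pi : ℂ) ≠ 0 := ofReal_ne_zero.mpr Real.pi_ne_zero
  rw [ratKernel, hsum, show ∀ s : ℝ, (2 * (Real.pi : ℂ) * I)⁻¹ * ((2 * s : ℝ) * I)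
      = ((Real.pi⁻¹ * s : ℝ) : ℂ) from fun s => by push_cast; field_simp, ofReal_re]

theorem div_ofReal_div_sub_eq (c w : ℂ) (x l : ℝ) {ε : ℝ} (hε : ε ≠ 0) :
    c / ((((x - l) / ε : ℝ) : ℂ) - w) = -ε * (c * ((l : ℂ) - (x - ε * w))⁻¹) := by
  have hεC : (ε : ℂ) ≠ 0 := ofReal_ne_zero.mpr hε
  rw [show (((x - l) / ε : ℝ) : ℂ) - w = -((l : ℂ) - (x - ε * w)) / ε by
    push_cast; field_simp; ring]
  rw [div_div_eq_mul_div, div_neg, ← neg_div, div_eq_mul_inv]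
  ring

theorem scaled_ratKernel_eq (m : ℕ) (a α : Fin m → ℂ) (x l : ℝ) {ε : ℝ} (hε : ε ≠ 0) :
    ε⁻¹ * ratKernel m a α ((x - l) / ε)
      = -Real.pi⁻¹ * ∑ j, (α j * ((l : ℂ) - (x - ε * a j))⁻¹).im := by
  simp only [ratKernel_eq_sum_im, div_ofReal_div_sub_eq _ _ x l hε, neg_mul, neg_im,
    im_ofReal_mul, Finset.sum_neg_distrib, ← Finset.mul_sum]
  field_simp

theorem integrable_inv_ofReal_sub (μ : Measure ℝ) [IsFiniteMeasure μ] {z : ℂ} (hz : z.im ≠ 0) :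
    Integrable (fun l : ℝ => ((l : ℂ) - z)⁻¹) μ := by
  have hne : ∀ l : ℝ, (l : ℂ) - z ≠ 0 := fun l h => hz (by
    rw [← sub_eq_zero.mp h, ofReal_im])
  refine Integrable.of_bound (C := |z.im|⁻¹)
    ((continuous_ofReal.sub continuous_const).inv₀ hne).aestronglyMeasurable
    (Filter.Eventually.of_forall fun l => ?_)
  rw [norm_inv]
  refine inv_anti₀ (abs_pos.mpr hz) ?_
  calc |z.im| = |((l : ℂ) - z).im| := by rw [sub_im, ofReal_im, zero_sub, abs_neg]
    _ ≤ ‖(l : ℂ) - z‖ := abs_im_le_norm _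

theorem integral_im_const_mul_inv_ofReal_sub (μ : Measure ℝ) [IsFiniteMeasure μ] (c : ℂ)
    {z : ℂ} (hz : z.im ≠ 0) :
    ∫ l : ℝ, (c * ((l : ℂ) - z)⁻¹).im ∂μ = (c * ∫ l : ℝ, ((l : ℂ) - z)⁻¹ ∂μ).im := by
  rw [← integral_const_mul]
  exact integral_im ((integrable_inv_ofReal_sub μ hz).const_mul c)

theorem im_ofReal_sub_ofReal_mul_ne_zero (x : ℝ) {ε : ℝ} (hε : 0 < ε) {w : ℂ} (hw : 0 < w.im) :
    ((x : ℂ) - ε * w).im ≠ 0 := by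
  rw [sub_im, ofReal_im, im_ofReal_mul, zero_sub, neg_ne_zero]
  positivity

theorem generalized_stone_formula_general
    {H : Type*} [NormedAddCommGroup H] [InnerProductSpace ℂ H]
    (μ : Measure ℝ) [IsFiniteMeasure μ] (f : H) (R : ℂ → (H →L[ℂ] H))
    (hres : ∀ z : ℂ, z.im ≠ 0 → ⟪(R z) f, f⟫ = ∫ l : ℝ, ((l : ℂ) - z)⁻¹ ∂μ)
    (m : ℕ) (a α : Fin m → ℂ)
    (ha : ∀ j, 0 < (a j).im)
    (x ε : ℝ) (hε : 0 < ε) :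
    ∫ l : ℝ, ε⁻¹ * ratKernel m a α ((x - l) / ε) ∂μ
      = -(1 / Real.pi) *
          ∑ j, (α j * ⟪(R ((x : ℂ) - (ε : ℂ) * a j)) f, f⟫).im := by
  have hz : ∀ j, ((x : ℂ) - ε * a j).im ≠ 0 :=
    fun j => im_ofReal_sub_ofReal_mul_ne_zero x hε (ha j)
  simp_rw [scaled_ratKernel_eq m a α x _ hε.ne']
  rw [integral_const_mul, integral_finsetSum _ fun j _ => ?_, one_div]
  · congr 1
    refine Finset.sum_congr rfl fun j _ => ?_
    rw [integral_im_const_mul_inv_ofReal_sub μ (α j) (hz j), hres _ (hz j)]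
  · exact ((integrable_inv_ofReal_sub μ (hz j)).const_mul (α j)).im

/-- **Generalized Stone formula.** If `μ` is the scalar spectral measure of `f` for a
self-adjoint operator `𝓛` (encoded via the resolvent identity
`⟪(𝓛 - z)⁻¹ f, f⟫ = ∫ (λ - z)⁻¹ dμ(λ)`), the `aⱼ` lie in the open upper half-plane and
the `αⱼ` solve the transposed Vandermonde system, then with `K_ε(x) = ε⁻¹ K(x/ε)`:
`[K_ε * μ](x) = -(1/π) ∑ⱼ Im (αⱼ ⟪(𝓛 - (x - ε aⱼ))⁻¹ f, f⟫)`. -/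
theorem generalized_stone_formula
    {H : Type*} [NormedAddCommGroup H] [InnerProductSpace ℂ H]
    (μ : Measure ℝ) [IsFiniteMeasure μ] (f : H) (R : ℂ → (H →L[ℂ] H))
    (hres : ∀ z : ℂ, z.im ≠ 0 → ⟪(R z) f, f⟫ = ∫ l : ℝ, ((l : ℂ) - z)⁻¹ ∂μ)
    (m : ℕ) (hm : 0 < m) (a α : Fin m → ℂ)
    (ha : ∀ j, 0 < (a j).im) (hinj : Function.Injective a)
    (hvand : ∀ k : ℕ, k < m → ∑ j, α j * a j ^ k = if k = 0 then 1 else 0)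
    (x ε : ℝ) (hε : 0 < ε) :
    ∫ l : ℝ, ε⁻¹ * ratKernel m a α ((x - l) / ε) ∂μ
      = -(1 / Real.pi) *
          ∑ j, (α j * ⟪(R ((x : ℂ) - (ε : ℂ) * a j)) f, f⟫).im :=
  generalized_stone_formula_general μ f R hres m a α ha x ε hε
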